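/- Let π^b be a baseline DTR and write a'_k = π^b_k(h⃗_k). Define π↑ recursively for k = K, K−1, …, 1 by π↑_k(h⃗_k) = π^b_k(h⃗_k)·sgn(𝒞^{π↑/π^b}_k(h⃗_k)) whenever 𝒞^{π↑/π^b}_k(h⃗_k) ≠ 0, and π↑_k(h⃗_k) = π^b_k(h⃗_k) when 𝒞^{π↑/π^b}_k(h⃗_k) = 0 (well-defined since 𝒞^{π↑/π^b}_k depends on π↑ only through π↑_{(k+1):K}). Then for every stage k ∈ {1,…,K}, every history h⃗_k, and every DTR π, V^{π↑/π^b}_k(h⃗_k) ≥ V^{π/π^b}_k(h⃗_k); in particular π↑ is an IV-improved DTR when the policy class consists of all DTRs. (Corollary 2: alternative characterization of the IV-improved DTR.) -/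

import Mathlib

open MeasureTheory

noncomputable section

open Classical in
/-- Real-valued indicator `1{p}` of a proposition. -/
noncomputable def ind (p : Prop) : ℝ := if p then 1 else 0

/-- Sign function: `+1` for positive, `−1` for negative, `0` at zero. -/
noncomputable def sgn (c : ℝ) : ℝ := if 0 < c then 1 else if c < 0 then -1 else 0

section DTR

/- Multi-stage setup: histories `H k` for stage indices `k = 0, …, K-1`
(stage `k+1` of the paper); `H K` is the terminal (post-trajectory) type.
New covariates arising after stage `k` live in `X (k+1)`, and
`concat k h a r x` is the concatenated history `(h⃗_k, a_k, r_k, x_{k+1})`.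
`P k h a` is the IV-constrained set of joint laws of `(R_k, X_{k+1})`.
At the last stage the new covariate is a null quantity that is simply ignored
(the terminal value function is identically `0`, so the stage-`K` formulas of the
paper are recovered). -/
variable (X : ℕ → Type) [∀ k, MeasurableSpace (X k)]
variable (H : ℕ → Type)
variable (concat : ∀ k, H k → ℝ → ℝ → X (k + 1) → H (k + 1))
variable (P : ∀ k, H k → ℝ → Set (Measure (ℝ × X (k + 1))))

open Classical in
/-- Relative value function of `π` with respect to the baseline `πb`, by backward induction
with `fuel` stages to go.  Writing `a'_k = π^b_k(h⃗_k)`: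
if `π_k(h⃗_k) = a'_k` it is `inf_{p ∈ 𝒫_{h⃗_k,a'_k}} ∫ V^{π/π^b}_{k+1}(h⃗_k,a'_k,r,x) dp`,
otherwise it is
`inf_{p ∈ 𝒫_{h⃗_k,−a'_k}} ∫ [r + V^{π/π^b}_{k+1}(h⃗_k,−a'_k,r,x)] dp − sup_{p' ∈ 𝒫_{h⃗_k,a'_k}} ∫ r dp'`. -/
noncomputable def rVal (πb π : ∀ k, H k → ℝ) : (fuel : ℕ) → (k : ℕ) → H k → ℝ
  | 0, _, _ => 0
  | fuel + 1, k, h =>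
      if π k h = πb k h then
        sInf ((fun p : Measure (ℝ × X (k + 1)) =>
            ∫ q, rVal πb π fuel (k + 1) (concat k h (πb k h) q.1 q.2) ∂p) '' P k h (πb k h))
      else
        sInf ((fun p : Measure (ℝ × X (k + 1)) =>
            ∫ q, (q.1 + rVal πb π fuel (k + 1) (concat k h (-(πb k h)) q.1 q.2)) ∂p)
            '' P k h (-(πb k h)))
          - sSup ((fun p : Measure (ℝ × X (k + 1)) => ∫ q, q.1 ∂p) '' P k h (πb k h))

/-- Relative value function `V^{π/π^b}_k` in a `K`-stage problem (stages `k = 0, …, K-1`). -/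
noncomputable def rV (K : ℕ) (πb π : ∀ k, H k → ℝ) (k : ℕ) (h : H k) : ℝ :=
  rVal X H concat P πb π (K - k) k h

open Classical in
/-- Relative `Q`-function `Q^{π/π^b}_k(h⃗_k, a)`. -/
noncomputable def rQ (K : ℕ) (πb π : ∀ k, H k → ℝ) (k : ℕ) (h : H k) (a : ℝ) : ℝ :=
  if a = πb k h then
    sInf ((fun p : Measure (ℝ × X (k + 1)) =>
        ∫ q, rV X H concat P K πb π (k + 1) (concat k h (πb k h) q.1 q.2) ∂p)
        '' P k h (πb k h))
  else
    sInf ((fun p : Measure (ℝ × X (k + 1)) =>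
        ∫ q, (q.1 + rV X H concat P K πb π (k + 1) (concat k h (-(πb k h)) q.1 q.2)) ∂p)
        '' P k h (-(πb k h)))
      - sSup ((fun p : Measure (ℝ × X (k + 1)) => ∫ q, q.1 ∂p) '' P k h (πb k h))

/-- Relative contrast `𝒞^{π/π^b}_k(h⃗_k)`
`= sup_{p'∈𝒫_{h⃗_k,a'_k}} ∫ r dp' + inf_{p∈𝒫_{h⃗_k,a'_k}} ∫ V^{π/π^b}_{k+1}(h⃗_k,a'_k,r,x) dp
   − inf_{p∈𝒫_{h⃗_k,−a'_k}} ∫ [r + V^{π/π^b}_{k+1}(h⃗_k,−a'_k,r,x)] dp`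
(at the final stage the middle term is `inf ∫ 0 dp = 0`, recovering the stage-`K` formula). -/
noncomputable def rC (K : ℕ) (πb π : ∀ k, H k → ℝ) (k : ℕ) (h : H k) : ℝ :=
  sSup ((fun p : Measure (ℝ × X (k + 1)) => ∫ q, q.1 ∂p) '' P k h (πb k h))
    + sInf ((fun p : Measure (ℝ × X (k + 1)) =>
        ∫ q, rV X H concat P K πb π (k + 1) (concat k h (πb k h) q.1 q.2) ∂p)
        '' P k h (πb k h))
    - sInf ((fun p : Measure (ℝ × X (k + 1)) =>
        ∫ q, (q.1 + rV X H concat P K πb π (k + 1) (concat k h (-(πb k h)) q.1 q.2)) ∂p)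
        '' P k h (-(πb k h)))

end DTR

/-!
Backward induction on the stage. For any policy `π`, the relative `Q`-function at `h⃗_k` takes
the value `𝒬(a'_k)` at the baseline action and `𝒬(a'_k) − 𝒞^π_k(h⃗_k)` at every other action,
so the sign rule makes `π↑_k` pick the larger of the two values of `𝒬^{π↑}`. Since infima of integrals are monotone in the
integrand, `𝒬` is monotone in the continuation value, whence
`V^π_k = 𝒬^π(π_k) ≤ 𝒬^{π↑}(π_k) ≤ 𝒬^{π↑}(π↑_k) = V^{π↑}_k`.
-/

theorem sInf_image_le_sInf_image {α : Type*} {s : Set α} {f g : α → ℝ}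
    (hne : s.Nonempty) (hbdd : BddBelow (f '' s)) (hfg : ∀ p ∈ s, f p ≤ g p) :
    sInf (f '' s) ≤ sInf (g '' s) := by
  refine le_csInf (hne.image g) ?_
  rintro _ ⟨p, hp, rfl⟩
  exact (csInf_le hbdd ⟨p, hp, rfl⟩).trans (hfg p hp)

theorem sInf_integral_le_sInf_integral {Ω : Type*} [MeasurableSpace Ω] {s : Set (Measure Ω)}
    {f g : Ω → ℝ} (hne : s.Nonempty) (hbdd : BddBelow ((fun p => ∫ x, f x ∂p) '' s))
    (hf : ∀ p ∈ s, Integrable f p) (hg : ∀ p ∈ s, Integrable g p) (hfg : f ≤ g) :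
    sInf ((fun p => ∫ x, f x ∂p) '' s) ≤ sInf ((fun p => ∫ x, g x ∂p) '' s) :=
  sInf_image_le_sInf_image hne hbdd fun p hp => integral_mono (hf p hp) (hg p hp) hfg

section RelativeValue

variable {X : ℕ → Type} [∀ k, MeasurableSpace (X k)] {H : ℕ → Type}
  {concat : ∀ k, H k → ℝ → ℝ → X (k + 1) → H (k + 1)}
  {P : ∀ k, H k → ℝ → Set (Measure (ℝ × X (k + 1)))} {K : ℕ} {πb : ∀ k, H k → ℝ}

local notation "𝒱" => rV X H concat P K πb
local notation "𝒬" => rQ X H concat P K πb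
local notation "𝒞" => rC X H concat P K πb

theorem rV_self (π : ∀ k, H k → ℝ) (h : H K) : 𝒱 π K h = 0 := by
  simp [rV, rVal]

theorem rV_eq_rQ (π : ∀ k, H k → ℝ) {k : ℕ} (hk : k < K) (h : H k) :
    𝒱 π k h = 𝒬 π k h (π k h) := by
  rw [rV, show K - k = K - (k + 1) + 1 by omega]
  rfl

theorem rQ_eq_sub_rC {π : ∀ k, H k → ℝ} {k : ℕ} {h : H k} {a : ℝ} (ha : a ≠ πb k h) :
    𝒬 π k h a = 𝒬 π k h (πb k h) - 𝒞 π k h := by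
  simp only [rQ, rC, if_neg ha, if_true]
  ring

theorem rQ_le_rQ_of_sgn_rule {π : ∀ k, H k → ℝ} {k : ℕ} {h : H k} (hb : πb k h ≠ 0)
    (hsgn : 𝒞 π k h ≠ 0 → π k h = πb k h * sgn (𝒞 π k h))
    (htie : 𝒞 π k h = 0 → π k h = πb k h) (a : ℝ) :
    𝒬 π k h a ≤ 𝒬 π k h (π k h) := by
  set q := 𝒬 π k h (πb k h)
  have hle_max : ∀ b, 𝒬 π k h b ≤ max q (q - 𝒞 π k h) := fun b => by
    by_cases hb' : b = πb k h
    · exact hb' ▸ le_max_left _ _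
    · exact (rQ_eq_sub_rC hb').le.trans (le_max_right _ _)
  suffices 𝒬 π k h (π k h) = max q (q - 𝒞 π k h) from this ▸ hle_max a
  rcases lt_trichotomy (𝒞 π k h) 0 with hC | hC | hC
  · have hflip : π k h = -πb k h := by
      rw [hsgn hC.ne, sgn, if_neg hC.not_gt, if_pos hC, mul_neg_one]
    have hne : π k h ≠ πb k h := by
      rw [hflip]
      exact fun h' => hb (by linarith)
    rw [rQ_eq_sub_rC hne, max_eq_right (by linarith)]
  · rw [htie hC, hC, sub_zero, max_self]
  · rw [hsgn hC.ne', sgn, if_pos hC, mul_one, max_eq_left (by linarith)]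

theorem rQ_mono {π π' : ∀ k, H k → ℝ} {k : ℕ} {h : H k} (a : ℝ)
    (hne : (P k h (πb k h)).Nonempty) (hne_neg : (P k h (-πb k h)).Nonempty)
    (hR : ∀ p ∈ P k h (-πb k h), Integrable (fun q : ℝ × X (k + 1) => q.1) p)
    (hV : ∀ b, ∀ p ∈ P k h b,
      Integrable (fun q : ℝ × X (k + 1) => 𝒱 π (k + 1) (concat k h b q.1 q.2)) p)
    (hV' : ∀ b, ∀ p ∈ P k h b,
      Integrable (fun q : ℝ × X (k + 1) => 𝒱 π' (k + 1) (concat k h b q.1 q.2)) p)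
    (hbdd : BddBelow ((fun p : Measure (ℝ × X (k + 1)) =>
      ∫ q, 𝒱 π (k + 1) (concat k h (πb k h) q.1 q.2) ∂p) '' P k h (πb k h)))
    (hbdd_neg : BddBelow ((fun p : Measure (ℝ × X (k + 1)) =>
      ∫ q, (q.1 + 𝒱 π (k + 1) (concat k h (-πb k h) q.1 q.2)) ∂p) '' P k h (-πb k h)))
    (hle : ∀ h' : H (k + 1), 𝒱 π (k + 1) h' ≤ 𝒱 π' (k + 1) h') :
    𝒬 π k h a ≤ 𝒬 π' k h a := by
  unfold rQ
  split_ifs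
  · exact sInf_integral_le_sInf_integral hne hbdd (hV _) (hV' _) fun q => hle _
  · exact sub_le_sub_right (sInf_integral_le_sInf_integral hne_neg hbdd_neg
      (fun p hp => (hR p hp).add (hV _ p hp)) (fun p hp => (hR p hp).add (hV' _ p hp))
      fun q => add_le_add_right (hle _) q.1) _

end RelativeValue

theorem alternative_characterization_IV_improved_DTR_general
    (X : ℕ → Type) [∀ k, MeasurableSpace (X k)] (H : ℕ → Type)
    (concat : ∀ k, H k → ℝ → ℝ → X (k + 1) → H (k + 1))
    (P : ∀ k, H k → ℝ → Set (Measure (ℝ × X (k + 1))))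
    (K : ℕ)
    (hPne : ∀ k (h : H k) (a : ℝ), a = 1 ∨ a = -1 → (P k h a).Nonempty)
    (hIntR : ∀ k (h : H k) (a : ℝ), ∀ p ∈ P k h a,
      Integrable (fun q : ℝ × X (k + 1) => q.1) p)
    (hIntV : ∀ (πb π : ∀ k, H k → ℝ) k (h : H k) (a : ℝ), ∀ p ∈ P k h a,
      Integrable (fun q : ℝ × X (k + 1) =>
        rV X H concat P K πb π (k + 1) (concat k h a q.1 q.2)) p)
    (hBddB : ∀ (πb π : ∀ k, H k → ℝ) k (h : H k) (a : ℝ),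
      BddBelow ((fun p : Measure (ℝ × X (k + 1)) =>
          ∫ q, (q.1 + rV X H concat P K πb π (k + 1) (concat k h a q.1 q.2)) ∂p) '' P k h a)
      ∧ BddBelow ((fun p : Measure (ℝ × X (k + 1)) =>
          ∫ q, rV X H concat P K πb π (k + 1) (concat k h a q.1 q.2) ∂p) '' P k h a))
    (πb : ∀ k, H k → ℝ) (hπb : ∀ k (h : H k), πb k h = 1 ∨ πb k h = -1)
    (πup : ∀ k, H k → ℝ)
    (hπup_sgn : ∀ k, k < K → ∀ h : H k,
      (rC X H concat P K πb πup k h ≠ 0 →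
        πup k h = πb k h * sgn (rC X H concat P K πb πup k h)) ∧
      (rC X H concat P K πb πup k h = 0 → πup k h = πb k h)) :
    ∀ k, k < K → ∀ h : H k, ∀ π : ∀ j, H j → ℝ,
      (∀ j (hj : H j), π j hj = 1 ∨ π j hj = -1) →
      rV X H concat P K πb π k h ≤ rV X H concat P K πb πup k h := by
  intro k hk h π _
  revert h
  refine Nat.decreasingInduction (fun j hj ih h => ?_) (fun h => by simp only [rV_self, le_refl])
    hk.le
  have hb := hπb j h
  have hb_ne : πb j h ≠ 0 := by rcases hb with e | e <;> norm_num [e]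
  have hb_neg : -πb j h = 1 ∨ -πb j h = -1 := by rcases hb with e | e <;> norm_num [e]
  obtain ⟨hsgn, htie⟩ := hπup_sgn j hj h
  calc rV X H concat P K πb π j h = rQ X H concat P K πb π j h (π j h) := rV_eq_rQ π hj h
    _ ≤ rQ X H concat P K πb πup j h (π j h) :=
      rQ_mono _ (hPne j h _ hb) (hPne j h _ hb_neg) (hIntR j h _) (hIntV πb π j h)
        (hIntV πb πup j h) (hBddB πb π j h _).2 (hBddB πb π j h _).1 ih
    _ ≤ rQ X H concat P K πb πup j h (πup j h) := rQ_le_rQ_of_sgn_rule hb_ne hsgn htie _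
    _ = rV X H concat P K πb πup j h := (rV_eq_rQ πup hj h).symm

/-- Corollary 2 (alternative characterization of the IV-improved DTR): if the DTR `π↑`
satisfies `π↑_k(h⃗_k) = π^b_k(h⃗_k)·sgn(𝒞^{π↑/π^b}_k(h⃗_k))` whenever the relative contrast is
nonzero, and `π↑_k(h⃗_k) = π^b_k(h⃗_k)` on ties, then `π↑` maximizes the relative value
function `V^{π/π^b}_k(h⃗_k)` at every stage `k` and every history `h⃗_k`, over all
(Boolean) DTRs `π`: it is an IV-improved DTR. -/
theorem alternative_characterization_IV_improved_DTR
    (X : ℕ → Type) [∀ k, MeasurableSpace (X k)] (H : ℕ → Type)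
    (concat : ∀ k, H k → ℝ → ℝ → X (k + 1) → H (k + 1))
    (P : ∀ k, H k → ℝ → Set (Measure (ℝ × X (k + 1))))
    (K : ℕ) (hK : 1 ≤ K)
    (hPne : ∀ k (h : H k) (a : ℝ), a = 1 ∨ a = -1 → (P k h a).Nonempty)
    (hPprob : ∀ k (h : H k) (a : ℝ), ∀ p ∈ P k h a, IsProbabilityMeasure p)
    (hIntR : ∀ k (h : H k) (a : ℝ), ∀ p ∈ P k h a,
      Integrable (fun q : ℝ × X (k + 1) => q.1) p)
    (hIntV : ∀ (πb π : ∀ k, H k → ℝ) k (h : H k) (a : ℝ), ∀ p ∈ P k h a,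
      Integrable (fun q : ℝ × X (k + 1) =>
        rV X H concat P K πb π (k + 1) (concat k h a q.1 q.2)) p)
    (hBddB : ∀ (πb π : ∀ k, H k → ℝ) k (h : H k) (a : ℝ),
      BddBelow ((fun p : Measure (ℝ × X (k + 1)) =>
          ∫ q, (q.1 + rV X H concat P K πb π (k + 1) (concat k h a q.1 q.2)) ∂p) '' P k h a)
      ∧ BddBelow ((fun p : Measure (ℝ × X (k + 1)) =>
          ∫ q, rV X H concat P K πb π (k + 1) (concat k h a q.1 q.2) ∂p) '' P k h a))
    (hBddA : ∀ k (h : H k) (a : ℝ),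
      BddAbove ((fun p : Measure (ℝ × X (k + 1)) => ∫ q, q.1 ∂p) '' P k h a))
    (πb : ∀ k, H k → ℝ) (hπb : ∀ k (h : H k), πb k h = 1 ∨ πb k h = -1)
    (πup : ∀ k, H k → ℝ)
    (hπup_pm : ∀ k (h : H k), πup k h = 1 ∨ πup k h = -1)
    (hπup_sgn : ∀ k, k < K → ∀ h : H k,
      (rC X H concat P K πb πup k h ≠ 0 →
        πup k h = πb k h * sgn (rC X H concat P K πb πup k h)) ∧
      (rC X H concat P K πb πup k h = 0 → πup k h = πb k h)) :
    ∀ k, k < K → ∀ h : H k, ∀ π : ∀ j, H j → ℝ,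
      (∀ j (hj : H j), π j hj = 1 ∨ π j hj = -1) →
      rV X H concat P K πb π k h ≤ rV X H concat P K πb πup k h :=
  alternative_characterization_IV_improved_DTR_general X H concat P K hPne hIntR hIntV hBddB πb hπb
    πup hπup_sgn

end
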